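/- Let A ∈ ℝ^{n×n} be nonsingular. Then the relative distance from A to the set of singular matrices equals the reciprocal of its condition number: inf{ ‖A − B‖₂ / ‖A‖₂ : B ∈ ℝ^{n×n}, det(B) = 0 } = 1 / cond₂(A), where cond₂(A) = ‖A‖₂ ‖A⁻¹‖₂; equivalently, the distance from A to the nearest singular matrix in the spectral norm equals the smallest singular value σ_n of A, and this distance is attained. -/

import Mathlib

/-!
Write `A = U Σ Vᵀ`. Orthogonal factors preserve Euclidean norms, so `‖A‖₂ = σ₁`,
`‖A⁻¹‖₂ = 1 / σₙ` and `‖A x‖₂ ≥ σₙ ‖x‖₂` for every `x`. If `B` is singular, pick `x ≠ 0` with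
`B x = 0`; then `‖(A - B) x‖₂ = ‖A x‖₂ ≥ σₙ ‖x‖₂`, hence `‖A - B‖₂ ≥ σₙ`. Replacing `σₙ` by `0`
in `Σ` gives a singular `B` with `A - B = U diag(0, …, 0, σₙ) Vᵀ`, of norm exactly `σₙ`.
Dividing by `‖A‖₂ = σ₁` turns `σₙ` into `σₙ / σ₁ = 1 / cond₂(A)`.
-/

open Matrix

/-- The Euclidean (2-)norm on `ℝ^n`. -/
noncomputable def enorm {n : ℕ} (v : Fin n → ℝ) : ℝ := Real.sqrt (∑ i, (v i) ^ 2)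

/-- The spectral norm `‖A‖₂ = max_{‖x‖₂ = 1} ‖Ax‖₂` of a real matrix. -/
noncomputable def matSpectralNorm {m n : ℕ} (A : Matrix (Fin m) (Fin n) ℝ) : ℝ :=
  sSup {r : ℝ | ∃ x : Fin n → ℝ, _root_.enorm x = 1 ∧ r = _root_.enorm (A.mulVec x)}

/-- `IsRSVD A U S V` says that `A = U Σ Vᵀ` is a singular value decomposition of the real
matrix `A`: `U`, `V` are orthogonal and `S` is diagonal with nonincreasing nonnegative
diagonal entries. -/
def IsRSVD {m n : ℕ} (A : Matrix (Fin m) (Fin n) ℝ) (U : Matrix (Fin m) (Fin m) ℝ)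
    (S : Matrix (Fin m) (Fin n) ℝ) (V : Matrix (Fin n) (Fin n) ℝ) : Prop :=
  Uᵀ * U = 1 ∧ Vᵀ * V = 1 ∧
  (∀ (i : Fin m) (j : Fin n), (i : ℕ) ≠ (j : ℕ) → S i j = 0) ∧
  (∀ (i : Fin m) (j : Fin n), 0 ≤ S i j) ∧
  (∀ (i i' : Fin m) (j j' : Fin n), (i : ℕ) = (j : ℕ) → (i' : ℕ) = (j' : ℕ) →
    (i : ℕ) ≤ (i' : ℕ) → S i' j' ≤ S i j) ∧
  A = U * S * Vᵀ

local notation "‖" v "‖₂" => @_root_.enorm _ v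

section EuclideanNorm

variable {m n : ℕ}

lemma enorm_nonneg (v : Fin n → ℝ) : 0 ≤ ‖v‖₂ := Real.sqrt_nonneg _

lemma enorm_sq (v : Fin n → ℝ) : ‖v‖₂ ^ 2 = ∑ i, v i ^ 2 :=
  Real.sq_sqrt (Finset.sum_nonneg fun _ _ => sq_nonneg _)

lemma enorm_pos_of_ne_zero {v : Fin n → ℝ} (hv : v ≠ 0) : 0 < ‖v‖₂ := by
  obtain ⟨i, hi⟩ := Function.ne_iff.mp hv
  exact Real.sqrt_pos.mpr (Finset.sum_pos' (fun j _ => sq_nonneg _)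
    ⟨i, Finset.mem_univ i, pow_two_pos_of_ne_zero hi⟩)

lemma enorm_real_smul (c : ℝ) (v : Fin n → ℝ) : ‖c • v‖₂ = |c| * ‖v‖₂ := by
  rw [_root_.enorm, _root_.enorm, ← Real.sqrt_sq_eq_abs, ← Real.sqrt_mul (sq_nonneg c),
    Finset.mul_sum]
  simp only [Pi.smul_apply, smul_eq_mul, mul_pow]

lemma enorm_single (k : Fin n) (c : ℝ) : ‖Pi.single k c‖₂ = |c| := by
  rw [_root_.enorm, Finset.sum_eq_single k (fun _ _ hj => by simp [hj]) (by simp),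
    Pi.single_eq_same, Real.sqrt_sq_eq_abs]

lemma enorm_mulVec_of_transpose_mul_self {U : Matrix (Fin m) (Fin n) ℝ} (hU : Uᵀ * U = 1)
    (x : Fin n → ℝ) : ‖U *ᵥ x‖₂ = ‖x‖₂ := by
  have sum_sq_eq_dotProduct {k : ℕ} (w : Fin k → ℝ) : ∑ i, w i ^ 2 = w ⬝ᵥ w := by
    simp only [dotProduct, sq]
  rw [_root_.enorm, _root_.enorm, sum_sq_eq_dotProduct, sum_sq_eq_dotProduct, dotProduct_mulVec,
    ← mulVec_transpose, mulVec_mulVec, hU, one_mulVec]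

lemma enorm_diagonal_mulVec_sq (d x : Fin n → ℝ) :
    ‖diagonal d *ᵥ x‖₂ ^ 2 = ∑ i, d i ^ 2 * x i ^ 2 := by
  simp only [enorm_sq, mulVec_diagonal, mul_pow]

lemma enorm_diagonal_mulVec_le {d : Fin n → ℝ} {c : ℝ} (hc : 0 ≤ c) (hd : ∀ i, |d i| ≤ c)
    (x : Fin n → ℝ) : ‖diagonal d *ᵥ x‖₂ ≤ c * ‖x‖₂ := by
  rw [← pow_le_pow_iff_left₀ (enorm_nonneg _) (by positivity [enorm_nonneg x]) two_ne_zero,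
    enorm_diagonal_mulVec_sq, mul_pow, enorm_sq, Finset.mul_sum]
  refine Finset.sum_le_sum fun i _ => mul_le_mul_of_nonneg_right ?_ (sq_nonneg _)
  rw [← sq_abs]
  exact pow_le_pow_left₀ (abs_nonneg _) (hd i) 2

lemma mul_enorm_le_enorm_diagonal_mulVec {d : Fin n → ℝ} {c : ℝ} (hc : 0 ≤ c)
    (hd : ∀ i, c ≤ |d i|) (x : Fin n → ℝ) : c * ‖x‖₂ ≤ ‖diagonal d *ᵥ x‖₂ := by
  rw [← pow_le_pow_iff_left₀ (by positivity [enorm_nonneg x]) (enorm_nonneg _) two_ne_zero,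
    enorm_diagonal_mulVec_sq, mul_pow, enorm_sq, Finset.mul_sum]
  refine Finset.sum_le_sum fun i _ => mul_le_mul_of_nonneg_right ?_ (sq_nonneg _)
  rw [← sq_abs (d i)]
  exact pow_le_pow_left₀ hc (hd i) 2

end EuclideanNorm

section SpectralNorm

variable {l m n : ℕ}

lemma bddAbove_enorm_mulVec_of_enorm_eq_one (M : Matrix (Fin m) (Fin n) ℝ) :
    BddAbove {r : ℝ | ∃ x : Fin n → ℝ, ‖x‖₂ = 1 ∧ r = ‖M *ᵥ x‖₂} := by
  refine ⟨Real.sqrt (∑ i, ∑ j, M i j ^ 2), ?_⟩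
  rintro r ⟨x, hx, rfl⟩
  refine Real.sqrt_le_sqrt (Finset.sum_le_sum fun i _ => ?_)
  calc (M *ᵥ x) i ^ 2 = (∑ j, M i j * x j) ^ 2 := rfl
    _ ≤ (∑ j, M i j ^ 2) * ∑ j, x j ^ 2 := Finset.sum_mul_sq_le_sq_mul_sq _ _ _
    _ = ∑ j, M i j ^ 2 := by rw [← enorm_sq x, hx, one_pow, mul_one]

lemma enorm_mulVec_le (M : Matrix (Fin m) (Fin n) ℝ) (x : Fin n → ℝ) :
    ‖M *ᵥ x‖₂ ≤ matSpectralNorm M * ‖x‖₂ := by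
  rcases eq_or_ne x 0 with rfl | hx
  · simp [_root_.enorm]
  have hpos := enorm_pos_of_ne_zero hx
  have hscale : |(‖x‖₂)⁻¹| = (‖x‖₂)⁻¹ := abs_of_pos (inv_pos.mpr hpos)
  have hunit : ‖(‖x‖₂)⁻¹ • x‖₂ = 1 := by
    rw [enorm_real_smul, hscale, inv_mul_cancel₀ hpos.ne']
  have := le_csSup (bddAbove_enorm_mulVec_of_enorm_eq_one M) ⟨_, hunit, rfl⟩
  rwa [mulVec_smul, enorm_real_smul, hscale, inv_mul_le_iff₀ hpos, mul_comm] at this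

lemma matSpectralNorm_le (hn : 0 < n) (M : Matrix (Fin m) (Fin n) ℝ) {c : ℝ}
    (h : ∀ x, ‖M *ᵥ x‖₂ ≤ c * ‖x‖₂) : matSpectralNorm M ≤ c := by
  refine csSup_le ⟨_, Pi.single ⟨0, hn⟩ 1, (enorm_single _ _).trans abs_one, rfl⟩ ?_
  rintro _ ⟨x, hx, rfl⟩
  simpa [hx] using h x

lemma matSpectralNorm_mul_of_transpose_mul_self {U : Matrix (Fin l) (Fin m) ℝ}
    (hU : Uᵀ * U = 1) (M : Matrix (Fin m) (Fin n) ℝ) :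
    matSpectralNorm (U * M) = matSpectralNorm M := by
  simp only [matSpectralNorm, ← mulVec_mulVec, enorm_mulVec_of_transpose_mul_self hU]

lemma matSpectralNorm_mul_transpose_of_transpose_mul_self {V : Matrix (Fin n) (Fin n) ℝ}
    (hV : Vᵀ * V = 1) (M : Matrix (Fin m) (Fin n) ℝ) :
    matSpectralNorm (M * Vᵀ) = matSpectralNorm M := by
  have hVt : Vᵀᵀ * Vᵀ = 1 := by rw [transpose_transpose, mul_eq_one_comm, hV]
  unfold matSpectralNorm
  congr 1
  ext r
  constructor
  · rintro ⟨x, hx, rfl⟩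
    exact ⟨Vᵀ *ᵥ x, by rw [enorm_mulVec_of_transpose_mul_self hVt, hx], by rw [mulVec_mulVec]⟩
  · rintro ⟨y, hy, rfl⟩
    exact ⟨V *ᵥ y, by rw [enorm_mulVec_of_transpose_mul_self hV, hy],
      by rw [mulVec_mulVec, Matrix.mul_assoc, hV, Matrix.mul_one]⟩

lemma matSpectralNorm_diagonal {d : Fin n → ℝ} {k : Fin n} (hk : ∀ i, |d i| ≤ |d k|) :
    matSpectralNorm (diagonal d) = |d k| := by
  refine le_antisymm (matSpectralNorm_le k.pos _ (enorm_diagonal_mulVec_le (abs_nonneg _) hk)) ?_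
  have := enorm_mulVec_le (diagonal d) (Pi.single k 1)
  rwa [mulVec_single_one, enorm_single, abs_one, mul_one, col_diagonal, enorm_single] at this

end SpectralNorm

namespace IsRSVD

variable {n : ℕ} {A U S V : Matrix (Fin n) (Fin n) ℝ}

lemma diag_nonneg (h : IsRSVD A U S V) (i : Fin n) : 0 ≤ S i i := h.2.2.2.1 i i

lemma diag_antitone (h : IsRSVD A U S V) {i j : Fin n} (hij : i ≤ j) : S j j ≤ S i i :=
  h.2.2.2.2.1 i j i j rfl rfl hij

lemma eq_mul_diagonal_mul (h : IsRSVD A U S V) : A = U * diagonal (fun i => S i i) * Vᵀ := by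
  have hS : S = diagonal fun i => S i i := by
    ext i j
    rcases eq_or_ne i j with rfl | hij
    · simp
    · rw [h.2.2.1 i j (Fin.val_ne_of_ne hij), diagonal_apply_ne _ hij]
  rw [← hS]
  exact h.2.2.2.2.2

lemma diag_ne_zero (h : IsRSVD A U S V) (hA : IsUnit A.det) (i : Fin n) : S i i ≠ 0 := by
  intro hi
  apply hA.ne_zero
  rw [h.eq_mul_diagonal_mul, det_mul, det_mul, det_diagonal,
    Finset.prod_eq_zero (f := fun j => S j j) (Finset.mem_univ i) hi, mul_zero, zero_mul]

lemma matSpectralNorm_eq {k : Fin n} (h : IsRSVD A U S V) (hk : ∀ i, S i i ≤ S k k) :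
    matSpectralNorm A = S k k := by
  rw [h.eq_mul_diagonal_mul, matSpectralNorm_mul_transpose_of_transpose_mul_self h.2.1,
    matSpectralNorm_mul_of_transpose_mul_self h.1, matSpectralNorm_diagonal (k := k),
    abs_of_nonneg (h.diag_nonneg k)]
  intro i
  rw [abs_of_nonneg (h.diag_nonneg i), abs_of_nonneg (h.diag_nonneg k)]
  exact hk i

lemma inv_eq (h : IsRSVD A U S V) (hA : IsUnit A.det) :
    A⁻¹ = V * diagonal (fun i => (S i i)⁻¹) * Uᵀ := by
  apply inv_eq_right_inv
  rw [h.eq_mul_diagonal_mul]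
  simp only [Matrix.mul_assoc]
  rw [← Matrix.mul_assoc Vᵀ V, h.2.1, Matrix.one_mul, ← Matrix.mul_assoc (diagonal _),
    diagonal_mul_diagonal]
  simp only [mul_inv_cancel₀ (h.diag_ne_zero hA _), diagonal_one, Matrix.one_mul]
  exact mul_eq_one_comm.mp h.1

lemma matSpectralNorm_inv {k : Fin n} (h : IsRSVD A U S V) (hA : IsUnit A.det)
    (hk : ∀ i, S k k ≤ S i i) : matSpectralNorm A⁻¹ = (S k k)⁻¹ := by
  rw [h.inv_eq hA, matSpectralNorm_mul_transpose_of_transpose_mul_self h.1,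
    matSpectralNorm_mul_of_transpose_mul_self h.2.1, matSpectralNorm_diagonal (k := k),
    abs_inv, abs_of_nonneg (h.diag_nonneg k)]
  intro i
  have hpos : 0 < S k k := (h.diag_nonneg k).lt_of_ne' (h.diag_ne_zero hA k)
  rw [abs_inv, abs_inv, abs_of_nonneg (h.diag_nonneg i), abs_of_nonneg (h.diag_nonneg k)]
  exact inv_anti₀ hpos (hk i)

lemma mul_enorm_le_enorm_mulVec {k : Fin n} (h : IsRSVD A U S V) (hk : ∀ i, S k k ≤ S i i)
    (x : Fin n → ℝ) : S k k * ‖x‖₂ ≤ ‖A *ᵥ x‖₂ := by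
  have hVt : Vᵀᵀ * Vᵀ = 1 := by rw [transpose_transpose, mul_eq_one_comm, h.2.1]
  rw [h.eq_mul_diagonal_mul, ← mulVec_mulVec, ← mulVec_mulVec,
    enorm_mulVec_of_transpose_mul_self h.1, ← enorm_mulVec_of_transpose_mul_self hVt x]
  exact mul_enorm_le_enorm_diagonal_mulVec (h.diag_nonneg k)
    (fun i => (hk i).trans (le_abs_self _)) _

lemma le_matSpectralNorm_sub {k : Fin n} (h : IsRSVD A U S V) (hk : ∀ i, S k k ≤ S i i)
    {B : Matrix (Fin n) (Fin n) ℝ} (hB : B.det = 0) : S k k ≤ matSpectralNorm (A - B) := by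
  obtain ⟨v, hv, hBv⟩ := exists_mulVec_eq_zero_iff.mpr hB
  refine le_of_mul_le_mul_right ?_ (enorm_pos_of_ne_zero hv)
  calc S k k * ‖v‖₂ ≤ ‖A *ᵥ v‖₂ := h.mul_enorm_le_enorm_mulVec hk v
    _ = ‖(A - B) *ᵥ v‖₂ := by rw [sub_mulVec, hBv, sub_zero]
    _ ≤ matSpectralNorm (A - B) * ‖v‖₂ := enorm_mulVec_le _ _

lemma exists_det_eq_zero_matSpectralNorm_sub_eq (h : IsRSVD A U S V) (k : Fin n) :
    ∃ B : Matrix (Fin n) (Fin n) ℝ, B.det = 0 ∧ matSpectralNorm (A - B) = S k k := by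
  refine ⟨U * diagonal (Function.update (fun i => S i i) k 0) * Vᵀ, ?_, ?_⟩
  · rw [det_mul, det_mul, det_diagonal,
      Finset.prod_eq_zero (Finset.mem_univ k) (Function.update_self _ _ _), mul_zero, zero_mul]
  have hsub : A - U * diagonal (Function.update (fun i => S i i) k 0) * Vᵀ =
      U * diagonal (Pi.single k (S k k)) * Vᵀ := by
    rw [h.eq_mul_diagonal_mul, ← Matrix.sub_mul, ← Matrix.mul_sub, diagonal_sub]
    congr
    funext i
    rcases eq_or_ne i k with rfl | hik <;> simp [*]
  rw [hsub, matSpectralNorm_mul_transpose_of_transpose_mul_self h.2.1,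
    matSpectralNorm_mul_of_transpose_mul_self h.1, matSpectralNorm_diagonal (k := k),
    Pi.single_eq_same, abs_of_nonneg (h.diag_nonneg k)]
  intro i
  rcases eq_or_ne i k with rfl | hik
  · rfl
  · rw [Pi.single_eq_of_ne hik, abs_zero]
    exact abs_nonneg _

end IsRSVD

/-- For a nonsingular `A ∈ ℝ^{n×n}`, the relative distance to the nearest singular
matrix equals `1 / cond₂(A)` where `cond₂(A) = ‖A‖₂‖A⁻¹‖₂`; equivalently, the distance
to the nearest singular matrix equals the smallest singular value `σ_n`, and this
distance is attained. -/
theorem distance_to_singular_matrices {n : ℕ} (hn : 0 < n)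
    (A : Matrix (Fin n) (Fin n) ℝ) (hA : IsUnit A.det)
    (U S V : Matrix (Fin n) (Fin n) ℝ) (hsvd : IsRSVD A U S V) :
    sInf {r : ℝ | ∃ B : Matrix (Fin n) (Fin n) ℝ, B.det = 0 ∧
        r = matSpectralNorm (A - B) / matSpectralNorm A} =
      1 / (matSpectralNorm A * matSpectralNorm A⁻¹) ∧
    (∀ B : Matrix (Fin n) (Fin n) ℝ, B.det = 0 →
      S ⟨n - 1, by omega⟩ ⟨n - 1, by omega⟩ ≤ matSpectralNorm (A - B)) ∧
    (∃ B : Matrix (Fin n) (Fin n) ℝ, B.det = 0 ∧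
      matSpectralNorm (A - B) = S ⟨n - 1, by omega⟩ ⟨n - 1, by omega⟩) := by
  have hfirst : ∀ i, S i i ≤ S ⟨0, hn⟩ ⟨0, hn⟩ := fun i => hsvd.diag_antitone (Nat.zero_le _)
  have hlast : ∀ i, S ⟨n - 1, by omega⟩ ⟨n - 1, by omega⟩ ≤ S i i :=
    fun i => hsvd.diag_antitone (Nat.le_sub_one_of_lt i.isLt)
  have hlower (B : Matrix (Fin n) (Fin n) ℝ) (hB : B.det = 0) :=
    hsvd.le_matSpectralNorm_sub hlast hB
  obtain ⟨B₀, hB₀, hB₀_norm⟩ := hsvd.exists_det_eq_zero_matSpectralNorm_sub_eq ⟨n - 1, by omega⟩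
  refine ⟨?_, hlower, B₀, hB₀, hB₀_norm⟩
  have hσ₁ : 0 < S ⟨0, hn⟩ ⟨0, hn⟩ :=
    (hsvd.diag_nonneg _).lt_of_ne' (hsvd.diag_ne_zero hA _)
  have hleast : IsLeast {r : ℝ | ∃ B : Matrix (Fin n) (Fin n) ℝ, B.det = 0 ∧
      r = matSpectralNorm (A - B) / matSpectralNorm A}
      (S ⟨n - 1, by omega⟩ ⟨n - 1, by omega⟩ / S ⟨0, hn⟩ ⟨0, hn⟩) := by
    rw [hsvd.matSpectralNorm_eq hfirst]
    refine ⟨⟨B₀, hB₀, by rw [hB₀_norm]⟩, ?_⟩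
    rintro _ ⟨B, hB, rfl⟩
    exact div_le_div_of_nonneg_right (hlower B hB) hσ₁.le
  rw [hleast.csInf_eq, hsvd.matSpectralNorm_eq hfirst, hsvd.matSpectralNorm_inv hA hlast]
  field_simp
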